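/- Let ℓ ≥ 2 and let r satisfy 0 ≤ r < 2^ℓ. Then Δ₀(2^ℓ + r) = Δ₀(r) + 2 if r ≤ 2^{ℓ−1}, and Δ₀(2^ℓ + r) = Δ₀(2^{ℓ+1} − r) if r > 2^{ℓ−1}. Moreover, m₀(2^ℓ + r) ≡ m₀(r) (mod 2) if r ≤ 2^{ℓ−1}, and m₀(2^ℓ + r) ≡ m₀(2^{ℓ+1} − r) + Δ₀(2^{ℓ+1} − r) (mod 2) if r > 2^{ℓ−1}. -/

import Mathlib

/-- The 2-kernel of a sequence `s : ℕ → ℤ`. -/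
def kernel2 (s : ℕ → ℤ) : Set (ℕ → ℤ) :=
  {t | ∃ i j : ℕ, j < 2 ^ i ∧ t = fun n => s (2 ^ i * n + j)}

/-- A sequence is 2-regular if the ℤ-module spanned by its 2-kernel is finitely generated. -/
def IsTwoRegular (s : ℕ → ℤ) : Prop :=
  (Submodule.span ℤ (kernel2 s)).FG

/-- A sequence is 2-automatic if its 2-kernel is finite. -/
def IsTwoAutomatic (s : ℕ → ℤ) : Prop :=
  (kernel2 s).Finite

/-- The period-doubling word, fixed point (starting with 0) of 0 ↦ 01, 1 ↦ 00:
its `n`-th letter is the parity of the 2-adic valuation of `n+1`. -/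
def pd (n : ℕ) : ℕ := (n + 1).factorization 2 % 2

/-- The Thue–Morse word, fixed point (starting with 0) of 0 ↦ 01, 1 ↦ 10:
its `n`-th letter is the parity of the binary digit sum of `n`. -/
def tm (n : ℕ) : ℕ := (Nat.digits 2 n).sum % 2

/-- The 2-block coding `x = block(p, 2)` of the period-doubling word. -/
def xw (n : ℕ) : ℕ := 2 * pd n + pd (n + 1)

/-- The 2-block coding `y = block(t, 2)` of the Thue–Morse word. -/
def yw (n : ℕ) : ℕ := 2 * tm n + tm (n + 1)

/-- The factor of an infinite word `w` of length `len` occurring at position `i`. -/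
def factorAt (w : ℕ → ℕ) (i len : ℕ) : List ℕ :=
  (List.range len).map fun k => w (i + k)

/-- `u` is a factor of the infinite word `w`. -/
def IsFactor (w : ℕ → ℕ) (u : List ℕ) : Prop :=
  ∃ i, u = factorAt w i u.length

/-- Maximal number of 0's in a factor of `x` of length `n`. -/
noncomputable def M0 (n : ℕ) : ℕ := sSup {k | ∃ i, (factorAt xw i n).count 0 = k}

/-- Minimal number of 0's in a factor of `x` of length `n`. -/
noncomputable def m0 (n : ℕ) : ℕ := sInf {k | ∃ i, (factorAt xw i n).count 0 = k}

noncomputable def D0 (n : ℕ) : ℕ := M0 n - m0 n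

/-- Maximal number of 2's in a factor of `x` of length `n`. -/
noncomputable def M2c (n : ℕ) : ℕ := sSup {k | ∃ i, (factorAt xw i n).count 2 = k}

/-- Minimal number of 2's in a factor of `x` of length `n`. -/
noncomputable def m2c (n : ℕ) : ℕ := sInf {k | ∃ i, (factorAt xw i n).count 2 = k}

/-- The max-jump function for `M0`. -/
noncomputable def JM0 : ℕ → ℕ
  | 0 => 0
  | n + 1 => if M0 n < M0 (n + 1) then 1 else 0

/-- The min-jump function for `m0`. -/
noncomputable def jm0 (n : ℕ) : ℕ := if m0 n < m0 (n + 1) then 1 else 0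

/-- Maximal total number of 1's and 2's in a factor of `y` of length `n`. -/
noncomputable def M12 (n : ℕ) : ℕ :=
  sSup {k | ∃ i, (factorAt yw i n).count 1 + (factorAt yw i n).count 2 = k}

/-- Minimal total number of 1's and 2's in a factor of `y` of length `n`. -/
noncomputable def m12 (n : ℕ) : ℕ :=
  sInf {k | ∃ i, (factorAt yw i n).count 1 + (factorAt yw i n).count 2 = k}

noncomputable def D12 (n : ℕ) : ℕ := M12 n - m12 n

/-- Maximal total number of 0's and 3's in a factor of `y` of length `n`. -/
noncomputable def M03 (n : ℕ) : ℕ :=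
  sSup {k | ∃ i, (factorAt yw i n).count 0 + (factorAt yw i n).count 3 = k}

/-- Minimal total number of 0's and 3's in a factor of `y` of length `n`. -/
noncomputable def m03 (n : ℕ) : ℕ :=
  sInf {k | ∃ i, (factorAt yw i n).count 0 + (factorAt yw i n).count 3 = k}

/-- The max-jump function for `M03`. -/
noncomputable def JM03 (n : ℕ) : ℕ := if M03 (n - 1) < M03 n then 1 else 0

/-- The min-jump function for `m03`. -/
noncomputable def jm03 (n : ℕ) : ℕ := if m03 n < m03 (n + 1) then 1 else 0

/-- Abelian complexity: the number of abelian equivalence classes (i.e. distinct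
multisets of letters) of factors of `w` of length `n`. -/
noncomputable def abComplexity (w : ℕ → ℕ) (n : ℕ) : ℕ :=
  Set.ncard {m : Multiset ℕ | ∃ i, (↑(factorAt w i n) : Multiset ℕ) = m}

/-- The number of occurrences of `v` as a factor of `u`. -/
def countFactor (u v : List ℕ) : ℕ :=
  ((List.range (u.length + 1 - v.length)).filter
    fun i => decide ((u.drop i).take v.length = v)).length

/-- 2-abelian complexity: the number of 2-abelian equivalence classes of factors of `w`
of length `n`, where two words are 2-abelian equivalent when every word of length at most 2
occurs equally often in both. -/
noncomputable def abel2Complexity (w : ℕ → ℕ) (n : ℕ) : ℕ :=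
  Set.ncard {f : List ℕ → ℕ |
    ∃ i, f = fun v => if v.length ≤ 2 then countFactor (factorAt w i n) v else 0}

/-- The morphism φ : 0 ↦ 12, 1 ↦ 12, 2 ↦ 00. -/
def phiL : ℕ → List ℕ
  | 0 => [1, 2]
  | 1 => [1, 2]
  | 2 => [0, 0]
  | _ => []

/-- The morphism τ : 0 ↦ 0, 1 ↦ 2, 2 ↦ 1. -/
def tauL : ℕ → ℕ
  | 1 => 2
  | 2 => 1
  | n => n

/-!
Since `x k = 0` exactly when `p (k / 2) = 1`, the zeros of `x` form the word `p` with every letter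
doubled; hence the extremal numbers of `0`s in windows of `x` of length `n` are sums of the extremal
numbers of `1`s in windows of `p` of lengths `⌊n/2⌋` and `⌈n/2⌉`. As `p (2k) = 0` and
`p (2k + 1) = 1 - p k`, a window of `p` of length `2m` at `i` contains `m` minus the number of `1`s
of the window of length `m` at `⌊i/2⌋`. This gives the recursions `min n + max ⌊n/2⌋ = ⌊n/2⌋` and
`max n + min ⌈n/2⌉ = ⌈n/2⌉`, and by induction on `ℓ`, for `2h ≤ 2^ℓ` and `4j ≤ 2^ℓ`,
`min (2^ℓ + h) = ⌊2^ℓ/3⌋ + min h`, `max (2^ℓ + h) = ⌊2^ℓ/3⌋ + 1 + max h`,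
`min (2^ℓ - j) + max j = ⌊2^ℓ/3⌋` and `max (2^ℓ - j) + min j = ⌊2^ℓ/3⌋ + 1`.
Both cases of the theorem are read off these identities.
-/

open Finset

section WindowSum

variable (f : ℕ → ℕ)

def windowSum (i n : ℕ) : ℕ := ∑ k ∈ range n, f (i + k)

noncomputable def maxWindowSum (n : ℕ) : ℕ := ⨆ i, windowSum f i n

noncomputable def minWindowSum (n : ℕ) : ℕ := ⨅ i, windowSum f i n

lemma windowSum_zero (i : ℕ) : windowSum f i 0 = 0 := rfl

lemma windowSum_succ (i n : ℕ) : windowSum f i (n + 1) = windowSum f i n + f (i + n) :=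
  sum_range_succ _ _

lemma minWindowSum_le_windowSum (i n : ℕ) : minWindowSum f n ≤ windowSum f i n :=
  ciInf_le (OrderBot.bddBelow _) i

lemma le_minWindowSum {n b : ℕ} (h : ∀ i, b ≤ windowSum f i n) : b ≤ minWindowSum f n :=
  le_ciInf h

lemma exists_windowSum_eq_minWindowSum (n : ℕ) : ∃ i, windowSum f i n = minWindowSum f n :=
  Nat.sInf_mem (Set.range_nonempty _)

lemma maxWindowSum_le {n b : ℕ} (h : ∀ i, windowSum f i n ≤ b) : maxWindowSum f n ≤ b :=
  ciSup_le h

lemma minWindowSum_le_minWindowSum_succ (n : ℕ) : minWindowSum f n ≤ minWindowSum f (n + 1) :=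
  le_minWindowSum f fun i =>
    (minWindowSum_le_windowSum f i n).trans (by rw [windowSum_succ]; exact Nat.le_add_right _ _)

variable {f}

lemma windowSum_le (hf : ∀ k, f k ≤ 1) (i n : ℕ) : windowSum f i n ≤ n := by
  simpa [windowSum] using sum_le_card_nsmul (range n) (fun k => f (i + k)) 1 fun k _ => hf (i + k)

lemma windowSum_le_maxWindowSum (hf : ∀ k, f k ≤ 1) (i n : ℕ) :
    windowSum f i n ≤ maxWindowSum f n :=
  le_ciSup ⟨n, by rintro _ ⟨j, rfl⟩; exact windowSum_le hf j n⟩ i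

lemma exists_windowSum_eq_maxWindowSum (hf : ∀ k, f k ≤ 1) (n : ℕ) :
    ∃ i, windowSum f i n = maxWindowSum f n :=
  Nat.sSup_mem (Set.range_nonempty _) ⟨n, by rintro _ ⟨j, rfl⟩; exact windowSum_le hf j n⟩

lemma minWindowSum_le_maxWindowSum (hf : ∀ k, f k ≤ 1) (n : ℕ) :
    minWindowSum f n ≤ maxWindowSum f n :=
  (minWindowSum_le_windowSum f 0 n).trans (windowSum_le_maxWindowSum hf 0 n)

lemma maxWindowSum_le_maxWindowSum_succ (hf : ∀ k, f k ≤ 1) (n : ℕ) :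
    maxWindowSum f n ≤ maxWindowSum f (n + 1) :=
  maxWindowSum_le f fun i =>
    (Nat.le_add_right _ _).trans
      ((windowSum_succ f i n).ge.trans (windowSum_le_maxWindowSum hf i _))

lemma maxWindowSum_succ_le_add_one (hf : ∀ k, f k ≤ 1) (n : ℕ) :
    maxWindowSum f (n + 1) ≤ maxWindowSum f n + 1 :=
  maxWindowSum_le f fun i => by
    rw [windowSum_succ]; exact add_le_add (windowSum_le_maxWindowSum hf i n) (hf _)

lemma minWindowSum_succ_le_add_one (hf : ∀ k, f k ≤ 1) (n : ℕ) :
    minWindowSum f (n + 1) ≤ minWindowSum f n + 1 := by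
  obtain ⟨i, hi⟩ := exists_windowSum_eq_minWindowSum f n
  calc minWindowSum f (n + 1) ≤ windowSum f i (n + 1) := minWindowSum_le_windowSum f i _
    _ ≤ minWindowSum f n + 1 := by rw [windowSum_succ, hi]; exact Nat.add_le_add_left (hf _) _

lemma exists_windowSum_eq_maxWindowSum_of_succ (hf : ∀ k, f k ≤ 1) (n : ℕ) :
    ∃ i, windowSum f i n = maxWindowSum f n ∧
      windowSum f i (n + 1) = maxWindowSum f (n + 1) := by
  have hmono := maxWindowSum_le_maxWindowSum_succ hf n
  have hstep := maxWindowSum_succ_le_add_one hf n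
  rcases Nat.lt_or_ge (maxWindowSum f n) (maxWindowSum f (n + 1)) with hlt | hge
  · obtain ⟨i, hi⟩ := exists_windowSum_eq_maxWindowSum hf (n + 1)
    have := windowSum_le_maxWindowSum hf i n
    have := windowSum_succ f i n
    have := hf (i + n)
    exact ⟨i, by omega, hi⟩
  · obtain ⟨i, hi⟩ := exists_windowSum_eq_maxWindowSum hf n
    have := windowSum_le_maxWindowSum hf i (n + 1)
    have := windowSum_succ f i n
    exact ⟨i, hi, by omega⟩

lemma exists_windowSum_eq_minWindowSum_of_succ (hf : ∀ k, f k ≤ 1) (n : ℕ) :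
    ∃ i, windowSum f i n = minWindowSum f n ∧
      windowSum f i (n + 1) = minWindowSum f (n + 1) := by
  have hmono := minWindowSum_le_minWindowSum_succ f n
  have hstep := minWindowSum_succ_le_add_one hf n
  rcases Nat.lt_or_ge (minWindowSum f n) (minWindowSum f (n + 1)) with hlt | hge
  · obtain ⟨i, hi⟩ := exists_windowSum_eq_minWindowSum f n
    have := minWindowSum_le_windowSum f i (n + 1)
    have := windowSum_succ f i n
    have := hf (i + n)
    exact ⟨i, hi, by omega⟩
  · obtain ⟨i, hi⟩ := exists_windowSum_eq_minWindowSum f (n + 1)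
    have := minWindowSum_le_windowSum f i n
    have := windowSum_succ f i n
    exact ⟨i, by omega, hi⟩

lemma windowSum_comp_div_two_two_mul (i m : ℕ) :
    windowSum (fun k => f (k / 2)) i (2 * m) =
      windowSum f ((i + 1) / 2) m + windowSum f (i / 2) m := by
  induction m with
  | zero => rfl
  | succ m ih =>
    have h1 : (i + (2 * m + 1)) / 2 = (i + 1) / 2 + m := by omega
    have h2 : (i + 2 * m) / 2 = i / 2 + m := by omega
    rw [show 2 * (m + 1) = 2 * m + 1 + 1 by ring, windowSum_succ, windowSum_succ, ih,
      windowSum_succ, windowSum_succ, h1, h2]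
    ring

lemma windowSum_comp_div_two (i n : ℕ) :
    windowSum (fun k => f (k / 2)) i n =
      windowSum f ((i + 1) / 2) (n / 2) + windowSum f (i / 2) ((n + 1) / 2) := by
  obtain ⟨m, rfl | rfl⟩ := Nat.even_or_odd' n
  · rw [windowSum_comp_div_two_two_mul, show (2 * m + 1) / 2 = m by omega,
      show 2 * m / 2 = m by omega]
  · rw [windowSum_succ, windowSum_comp_div_two_two_mul, show (2 * m + 1) / 2 = m by omega,
      show (2 * m + 1 + 1) / 2 = m + 1 by omega, windowSum_succ,
      show (i + 2 * m) / 2 = i / 2 + m by omega]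
    ring

lemma maxWindowSum_comp_div_two (hf : ∀ k, f k ≤ 1) (n : ℕ) :
    maxWindowSum (fun k => f (k / 2)) n =
      maxWindowSum f (n / 2) + maxWindowSum f ((n + 1) / 2) := by
  refine le_antisymm (maxWindowSum_le _ fun i => ?_) ?_
  · rw [windowSum_comp_div_two]
    exact add_le_add (windowSum_le_maxWindowSum hf _ _) (windowSum_le_maxWindowSum hf _ _)
  · obtain ⟨a, ha, ha'⟩ : ∃ a, windowSum f a (n / 2) = maxWindowSum f (n / 2) ∧
        windowSum f a ((n + 1) / 2) = maxWindowSum f ((n + 1) / 2) := by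
      obtain ⟨m, rfl | rfl⟩ := Nat.even_or_odd' n
      · obtain ⟨a, ha⟩ := exists_windowSum_eq_maxWindowSum hf m
        exact ⟨a, by simpa [show 2 * m / 2 = m by omega, show (2 * m + 1) / 2 = m by omega]⟩
      · simpa [show (2 * m + 1) / 2 = m by omega, show (2 * m + 1 + 1) / 2 = m + 1 by omega]
          using exists_windowSum_eq_maxWindowSum_of_succ hf m
    have := windowSum_le_maxWindowSum (fun k => hf (k / 2)) (2 * a) n
    rw [windowSum_comp_div_two, show (2 * a + 1) / 2 = a by omega, show 2 * a / 2 = a by omega,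
      ha, ha'] at this
    exact this

lemma minWindowSum_comp_div_two (hf : ∀ k, f k ≤ 1) (n : ℕ) :
    minWindowSum (fun k => f (k / 2)) n =
      minWindowSum f (n / 2) + minWindowSum f ((n + 1) / 2) := by
  refine le_antisymm ?_ (le_minWindowSum _ fun i => ?_)
  · obtain ⟨a, ha, ha'⟩ : ∃ a, windowSum f a (n / 2) = minWindowSum f (n / 2) ∧
        windowSum f a ((n + 1) / 2) = minWindowSum f ((n + 1) / 2) := by
      obtain ⟨m, rfl | rfl⟩ := Nat.even_or_odd' n
      · obtain ⟨a, ha⟩ := exists_windowSum_eq_minWindowSum f m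
        exact ⟨a, by simpa [show 2 * m / 2 = m by omega, show (2 * m + 1) / 2 = m by omega]⟩
      · simpa [show (2 * m + 1) / 2 = m by omega, show (2 * m + 1 + 1) / 2 = m + 1 by omega]
          using exists_windowSum_eq_minWindowSum_of_succ hf m
    have := minWindowSum_le_windowSum (fun k => f (k / 2)) (2 * a) n
    rw [windowSum_comp_div_two, show (2 * a + 1) / 2 = a by omega, show 2 * a / 2 = a by omega,
      ha, ha'] at this
    exact this
  · rw [windowSum_comp_div_two]
    exact add_le_add (minWindowSum_le_windowSum f _ _) (minWindowSum_le_windowSum f _ _)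

end WindowSum

lemma pd_le_one (n : ℕ) : pd n ≤ 1 :=
  Nat.le_of_lt_succ (Nat.mod_lt _ two_pos)

lemma pd_two_mul (n : ℕ) : pd (2 * n) = 0 := by
  simp [pd, Nat.factorization_eq_zero_of_not_dvd (by omega : ¬2 ∣ 2 * n + 1)]

lemma pd_two_mul_add_one (n : ℕ) : pd (2 * n + 1) + pd n = 1 := by
  have h2 : (Nat.factorization 2) 2 = 1 := by simp [Nat.Prime.factorization Nat.prime_two]
  simp only [pd, show 2 * n + 1 + 1 = 2 * (n + 1) by ring,
    Nat.factorization_mul two_ne_zero (Nat.add_one_ne_zero n), Finsupp.add_apply, h2]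
  omega

lemma pd_add_pd_succ_add_pd_div_two (k : ℕ) : pd k + pd (k + 1) + pd (k / 2) = 1 := by
  obtain ⟨j, rfl | rfl⟩ := Nat.even_or_odd' k
  · rw [pd_two_mul, show 2 * j / 2 = j by omega]
    have := pd_two_mul_add_one j
    omega
  · rw [show 2 * j + 1 + 1 = 2 * (j + 1) by ring, pd_two_mul, show (2 * j + 1) / 2 = j by omega]
    have := pd_two_mul_add_one j
    omega

lemma windowSum_pd_two_mul (i m : ℕ) : windowSum pd i (2 * m) + windowSum pd (i / 2) m = m := by
  induction m with
  | zero => rfl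
  | succ m ih =>
    have := pd_add_pd_succ_add_pd_div_two (i + 2 * m)
    rw [show (i + 2 * m) / 2 = i / 2 + m by omega] at this
    rw [show 2 * (m + 1) = 2 * m + 1 + 1 by ring, windowSum_succ, windowSum_succ, windowSum_succ,
      show i + (2 * m + 1) = i + 2 * m + 1 by ring]
    omega

lemma minWindowSum_pd_two_mul (m : ℕ) : minWindowSum pd (2 * m) + maxWindowSum pd m = m := by
  obtain ⟨a, ha⟩ := exists_windowSum_eq_maxWindowSum pd_le_one m
  obtain ⟨i, hi⟩ := exists_windowSum_eq_minWindowSum pd (2 * m)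
  have h₁ := minWindowSum_le_windowSum pd (2 * a) (2 * m)
  have h₂ := windowSum_le_maxWindowSum pd_le_one (i / 2) m
  have h₃ := windowSum_pd_two_mul (2 * a) m
  have h₄ := windowSum_pd_two_mul i m
  rw [show 2 * a / 2 = a by omega] at h₃
  omega

lemma maxWindowSum_pd_two_mul (m : ℕ) : maxWindowSum pd (2 * m) + minWindowSum pd m = m := by
  obtain ⟨a, ha⟩ := exists_windowSum_eq_minWindowSum pd m
  obtain ⟨i, hi⟩ := exists_windowSum_eq_maxWindowSum pd_le_one (2 * m)
  have h₁ := windowSum_le_maxWindowSum pd_le_one (2 * a) (2 * m)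
  have h₂ := minWindowSum_le_windowSum pd (i / 2) m
  have h₃ := windowSum_pd_two_mul (2 * a) m
  have h₄ := windowSum_pd_two_mul i m
  rw [show 2 * a / 2 = a by omega] at h₃
  omega

/-- A window of even length depends only on `i / 2`, so a minimal one can be taken to start at an
even position; the letter following it is then a `0`. -/
lemma minWindowSum_pd_two_mul_add_one (m : ℕ) :
    minWindowSum pd (2 * m + 1) = minWindowSum pd (2 * m) := by
  refine le_antisymm ?_ (minWindowSum_le_minWindowSum_succ pd _)
  obtain ⟨i, hi⟩ := exists_windowSum_eq_minWindowSum pd (2 * m)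
  have h₁ := minWindowSum_le_windowSum pd (2 * (i / 2)) (2 * m + 1)
  have h₂ := windowSum_pd_two_mul (2 * (i / 2)) m
  have h₃ := windowSum_pd_two_mul i m
  rw [windowSum_succ, show 2 * (i / 2) + 2 * m = 2 * (i / 2 + m) by ring, pd_two_mul] at h₁
  rw [show 2 * (i / 2) / 2 = i / 2 by omega] at h₂
  omega

/-- A maximal window of length `2m + 2` can be taken to start at an odd position; its last letter
is then a `0`. -/
lemma maxWindowSum_pd_two_mul_add_one (m : ℕ) :
    maxWindowSum pd (2 * m + 1) = maxWindowSum pd (2 * m + 2) := by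
  refine le_antisymm (maxWindowSum_le_maxWindowSum_succ pd_le_one _) ?_
  obtain ⟨i, hi⟩ := exists_windowSum_eq_maxWindowSum pd_le_one (2 * (m + 1))
  have h₁ := windowSum_le_maxWindowSum pd_le_one (2 * (i / 2) + 1) (2 * m + 1)
  have h₂ := windowSum_pd_two_mul (2 * (i / 2) + 1) (m + 1)
  have h₃ := windowSum_pd_two_mul i (m + 1)
  rw [show 2 * (m + 1) = 2 * m + 1 + 1 by ring, windowSum_succ,
    show 2 * (i / 2) + 1 + (2 * m + 1) = 2 * (i / 2 + m + 1) by ring, pd_two_mul,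
    show (2 * (i / 2) + 1) / 2 = i / 2 by omega] at h₂
  rw [show 2 * (m + 1) = 2 * m + 2 by ring] at hi h₃
  omega

lemma minWindowSum_pd_add_maxWindowSum_pd_half (n : ℕ) :
    minWindowSum pd n + maxWindowSum pd (n / 2) = n / 2 := by
  obtain ⟨m, rfl | rfl⟩ := Nat.even_or_odd' n
  · rw [show 2 * m / 2 = m by omega]; exact minWindowSum_pd_two_mul m
  · rw [show (2 * m + 1) / 2 = m by omega, minWindowSum_pd_two_mul_add_one]
    exact minWindowSum_pd_two_mul m

lemma maxWindowSum_pd_add_minWindowSum_pd_half (n : ℕ) :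
    maxWindowSum pd n + minWindowSum pd ((n + 1) / 2) = (n + 1) / 2 := by
  obtain ⟨m, rfl | rfl⟩ := Nat.even_or_odd' n
  · rw [show (2 * m + 1) / 2 = m by omega]; exact maxWindowSum_pd_two_mul m
  · rw [show (2 * m + 1 + 1) / 2 = m + 1 by omega, maxWindowSum_pd_two_mul_add_one,
      show 2 * m + 2 = 2 * (m + 1) by ring]
    exact maxWindowSum_pd_two_mul (m + 1)

lemma minWindowSum_pd_zero : minWindowSum pd 0 = 0 :=
  Nat.le_zero.mp (minWindowSum_le_windowSum pd 0 0)

lemma maxWindowSum_pd_zero : maxWindowSum pd 0 = 0 :=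
  Nat.le_zero.mp (maxWindowSum_le pd fun i => (windowSum_zero pd i).le)

lemma minWindowSum_pd_one : minWindowSum pd 1 = 0 :=
  Nat.le_zero.mp ((minWindowSum_le_windowSum pd 0 1).trans_eq (pd_two_mul 0))

lemma maxWindowSum_pd_one : maxWindowSum pd 1 = 1 := by
  have h₁ : pd 1 ≤ maxWindowSum pd 1 := by
    simpa [windowSum] using windowSum_le_maxWindowSum pd_le_one 1 1
  have h₂ := maxWindowSum_le pd fun i => windowSum_le pd_le_one i 1
  have h₃ : pd 1 + pd 0 = 1 := pd_two_mul_add_one 0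
  have h₄ : pd 0 = 0 := pd_two_mul 0
  omega

lemma two_pow_succ_div_three_add_two_pow_div_three (K : ℕ) :
    2 ^ (K + 1) / 3 + 2 ^ K / 3 + 1 = 2 ^ K := by
  have h : 2 ^ K % 3 ≠ 0 := fun h => by
    have := Nat.prime_three.dvd_of_dvd_pow (Nat.dvd_of_mod_eq_zero h); omega
  rw [pow_succ]
  omega

lemma minWindowSum_maxWindowSum_pd_two_pow_add {L : ℕ} (hL : 1 ≤ L) :
    ∀ h, 2 * h ≤ 2 ^ L →
      minWindowSum pd (2 ^ L + h) = 2 ^ L / 3 + minWindowSum pd h ∧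
        maxWindowSum pd (2 ^ L + h) = 2 ^ L / 3 + 1 + maxWindowSum pd h := by
  induction L, hL using Nat.le_induction with
  | base =>
    intro h hh
    replace hh : h ≤ 1 := by omega
    have := minWindowSum_pd_add_maxWindowSum_pd_half 2
    have := maxWindowSum_pd_add_minWindowSum_pd_half 2
    have := minWindowSum_pd_add_maxWindowSum_pd_half 3
    have := maxWindowSum_pd_add_minWindowSum_pd_half 3
    interval_cases h <;>
      simp_all [minWindowSum_pd_zero, maxWindowSum_pd_zero, minWindowSum_pd_one,
        maxWindowSum_pd_one]
  | succ K hK ih =>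
    intro h hh
    have hpow : 2 ^ (K + 1) = 2 * 2 ^ K := by ring
    have heven : 2 ∣ 2 ^ K := dvd_pow_self 2 (by omega)
    obtain ⟨ih₁, -⟩ := ih ((h + 1) / 2) (by omega)
    obtain ⟨-, ih₂⟩ := ih (h / 2) (by omega)
    have r₁ := minWindowSum_pd_add_maxWindowSum_pd_half (2 ^ (K + 1) + h)
    have r₂ := maxWindowSum_pd_add_minWindowSum_pd_half (2 ^ (K + 1) + h)
    rw [show (2 ^ (K + 1) + h) / 2 = 2 ^ K + h / 2 by omega] at r₁
    rw [show (2 ^ (K + 1) + h + 1) / 2 = 2 ^ K + (h + 1) / 2 by omega] at r₂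
    have := minWindowSum_pd_add_maxWindowSum_pd_half h
    have := maxWindowSum_pd_add_minWindowSum_pd_half h
    have := two_pow_succ_div_three_add_two_pow_div_three K
    omega

lemma minWindowSum_maxWindowSum_pd_two_pow_sub {L : ℕ} (hL : 2 ≤ L) :
    ∀ j, 4 * j ≤ 2 ^ L →
      minWindowSum pd (2 ^ L - j) + maxWindowSum pd j = 2 ^ L / 3 ∧
        maxWindowSum pd (2 ^ L - j) + minWindowSum pd j = 2 ^ L / 3 + 1 := by
  induction L, hL using Nat.le_induction with
  | base =>
    intro j hj
    replace hj : j ≤ 1 := by omega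
    have := minWindowSum_pd_add_maxWindowSum_pd_half 2
    have := maxWindowSum_pd_add_minWindowSum_pd_half 2
    have := minWindowSum_pd_add_maxWindowSum_pd_half 3
    have := maxWindowSum_pd_add_minWindowSum_pd_half 3
    have := minWindowSum_pd_add_maxWindowSum_pd_half 4
    have := maxWindowSum_pd_add_minWindowSum_pd_half 4
    interval_cases j <;>
      simp_all [minWindowSum_pd_zero, maxWindowSum_pd_zero, minWindowSum_pd_one,
        maxWindowSum_pd_one]
  | succ K hK ih =>
    intro j hj
    have hpow : 2 ^ (K + 1) = 2 * 2 ^ K := by ring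
    have hdvd : 2 ^ 2 ∣ 2 ^ K := pow_dvd_pow 2 hK
    obtain ⟨ih₁, -⟩ := ih (j / 2) (by omega)
    obtain ⟨-, ih₂⟩ := ih ((j + 1) / 2) (by omega)
    have r₁ := minWindowSum_pd_add_maxWindowSum_pd_half (2 ^ (K + 1) - j)
    have r₂ := maxWindowSum_pd_add_minWindowSum_pd_half (2 ^ (K + 1) - j)
    rw [show (2 ^ (K + 1) - j) / 2 = 2 ^ K - (j + 1) / 2 by omega] at r₁
    rw [show (2 ^ (K + 1) - j + 1) / 2 = 2 ^ K - j / 2 by omega] at r₂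
    have := minWindowSum_pd_add_maxWindowSum_pd_half j
    have := maxWindowSum_pd_add_minWindowSum_pd_half j
    have := two_pow_succ_div_three_add_two_pow_div_three K
    omega

lemma count_zero_singleton_xw (k : ℕ) : [xw k].count 0 = pd (k / 2) := by
  have h := pd_add_pd_succ_add_pd_div_two k
  have h' := pd_le_one (k / 2)
  rw [List.count_singleton]
  by_cases hk : pd (k / 2) = 1
  · simp [xw, show pd k = 0 by omega, show pd (k + 1) = 0 by omega, hk]
  · have : xw k ≠ 0 := by unfold xw; omega
    simp [this]
    omega

lemma count_zero_factorAt_xw (i n : ℕ) :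
    (factorAt xw i n).count 0 = windowSum (fun k => pd (k / 2)) i n := by
  induction n with
  | zero => rfl
  | succ n ih =>
    rw [factorAt, List.range_succ, List.map_append, List.count_append, ← factorAt, ih,
      List.map_singleton, count_zero_singleton_xw, windowSum_succ]

lemma M0_eq (n : ℕ) : M0 n = maxWindowSum pd (n / 2) + maxWindowSum pd ((n + 1) / 2) := by
  rw [← maxWindowSum_comp_div_two pd_le_one]
  simp only [M0, count_zero_factorAt_xw]
  rfl

lemma m0_eq (n : ℕ) : m0 n = minWindowSum pd (n / 2) + minWindowSum pd ((n + 1) / 2) := by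
  rw [← minWindowSum_comp_div_two pd_le_one]
  simp only [m0, count_zero_factorAt_xw]
  rfl

lemma m0_le_M0 (n : ℕ) : m0 n ≤ M0 n := by
  rw [m0_eq, M0_eq]
  exact add_le_add (minWindowSum_le_maxWindowSum pd_le_one _)
    (minWindowSum_le_maxWindowSum pd_le_one _)

lemma m0_M0_two_pow_add {l r : ℕ} (hl : 2 ≤ l) (hr : 2 * r ≤ 2 ^ l) :
    m0 (2 ^ l + r) = 2 * (2 ^ (l - 1) / 3) + m0 r ∧
      M0 (2 ^ l + r) = 2 * (2 ^ (l - 1) / 3) + 2 + M0 r := by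
  obtain ⟨L, rfl⟩ : ∃ L, l = L + 1 := ⟨l - 1, by omega⟩
  have hpow : 2 ^ (L + 1) = 2 * 2 ^ L := by ring
  have heven : 2 ∣ 2 ^ L := dvd_pow_self 2 (by omega)
  have hL : 1 ≤ L := by omega
  obtain ⟨h₁, h₂⟩ := minWindowSum_maxWindowSum_pd_two_pow_add hL (r / 2) (by omega)
  obtain ⟨h₃, h₄⟩ := minWindowSum_maxWindowSum_pd_two_pow_add hL ((r + 1) / 2) (by omega)
  rw [m0_eq, M0_eq, m0_eq, M0_eq, Nat.add_sub_cancel,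
    show (2 ^ (L + 1) + r) / 2 = 2 ^ L + r / 2 by omega,
    show (2 ^ (L + 1) + r + 1) / 2 = 2 ^ L + (r + 1) / 2 by omega, h₁, h₂, h₃, h₄]
  omega

lemma m0_M0_two_pow_succ_sub {l s : ℕ} (hl : 2 ≤ l) (hs : 2 * s < 2 ^ l) :
    m0 (2 ^ (l + 1) - s) + M0 s = 2 * (2 ^ l / 3) ∧
      M0 (2 ^ (l + 1) - s) + m0 s = 2 * (2 ^ l / 3) + 2 := by
  have hpow : 2 ^ (l + 1) = 2 * 2 ^ l := by ring
  have hdvd : 2 ^ 2 ∣ 2 ^ l := pow_dvd_pow 2 hl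
  obtain ⟨h₁, h₂⟩ := minWindowSum_maxWindowSum_pd_two_pow_sub hl ((s + 1) / 2) (by omega)
  obtain ⟨h₃, h₄⟩ := minWindowSum_maxWindowSum_pd_two_pow_sub hl (s / 2) (by omega)
  rw [m0_eq, M0_eq, m0_eq, M0_eq, show (2 ^ (l + 1) - s) / 2 = 2 ^ l - (s + 1) / 2 by omega,
    show (2 ^ (l + 1) - s + 1) / 2 = 2 ^ l - s / 2 by omega]
  omega

theorem stmt5 (l r : ℕ) (hl : 2 ≤ l) (hr : r < 2 ^ l) :
    (2 * r ≤ 2 ^ l →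
      D0 (2 ^ l + r) = D0 r + 2 ∧ m0 (2 ^ l + r) % 2 = m0 r % 2) ∧
    (2 ^ l < 2 * r →
      D0 (2 ^ l + r) = D0 (2 ^ (l + 1) - r) ∧
      m0 (2 ^ l + r) % 2 = (m0 (2 ^ (l + 1) - r) + D0 (2 ^ (l + 1) - r)) % 2) := by
  refine ⟨fun hsmall => ?_, fun hlarge => ?_⟩
  · obtain ⟨hm, hM⟩ := m0_M0_two_pow_add hl hsmall
    have := m0_le_M0 r
    unfold D0
    omega
  · set s := 2 ^ l - r with hs
    have hpow : 2 ^ (l + 1) = 2 * 2 ^ l := by ring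
    obtain ⟨hm, hM⟩ := m0_M0_two_pow_succ_sub hl (s := s) (by omega)
    obtain ⟨hm', hM'⟩ := m0_M0_two_pow_add hl (r := s) (by omega)
    have := m0_le_M0 s
    rw [show 2 ^ l + r = 2 ^ (l + 1) - s by omega, show 2 ^ (l + 1) - r = 2 ^ l + s by omega]
    unfold D0
    omega
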